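/- arXiv:1201.4552 — 2 statements merged into one kernel-verified Lean document; each statement's English description precedes it below -/
import Mathlib

section
/- Size-biasing identity: for any bounded measurable $F:\mathbb{R}\to\mathbb{R}$, $\mathbb{E}_p\otimes\mathbf{E}[F(\tilde Z_N)] = \mathbb{E}_p[W_N\, F(Z_N)]$, where $\tilde Z_N$ is the path count in the modified environment $\tilde X$ obtained from $X$ by forcing all edges along an independent random walk $T$ (with step law $f$) to be open. -/
open MeasureTheory ProbabilityTheory Filter

noncomputable section

/-- Transversal lattice `ℤ^d`. -/
abbrev Zd (d : ℕ) := Fin d → ℤ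

/-- A percolation environment on `ℕ × ℤ^d`: `X n x y` tells whether the oriented
edge from `(n, x)` to `(n+1, y)` is open. -/
abbrev Env (d : ℕ) := ℕ → Zd d → Zd d → Bool

/-- The edge variable associated to an edge `e = (n, x, y)`. -/
def edgeVal (d : ℕ) (e : ℕ × Zd d × Zd d) (X : Env d) : Bool := X e.1 e.2.1 e.2.2

/-- `pathCount d N X` = number of open oriented paths of length `N` starting at the origin. -/
def pathCount (d N : ℕ) (X : Env d) : ℕ :=
  Nat.card {S : Fin (N + 1) → Zd d //
    S 0 = 0 ∧ ∀ i : Fin N, X i (S i.castSucc) (S i.succ) = true}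

/-- `pathCountTo d N x X` = number of open oriented paths from `(0,0)` to `(N,x)`. -/
def pathCountTo (d N : ℕ) (x : Zd d) (X : Env d) : ℕ :=
  Nat.card {S : Fin (N + 1) → Zd d //
    S 0 = 0 ∧ S (Fin.last N) = x ∧ ∀ i : Fin N, X i (S i.castSucc) (S i.succ) = true}

/-- The renormalized partition function `W_N = p^{-N} Z_N`. -/
def W (d : ℕ) (p : ℝ) (N : ℕ) (X : Env d) : ℝ := (pathCount d N X : ℝ) / p ^ N

/-- The percolation event: existence of an infinite open oriented path from the origin. -/
def percEvent (d : ℕ) : Set (Env d) :=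
  {X | ∃ S : ℕ → Zd d, S 0 = 0 ∧ ∀ n, X n (S n) (S (n + 1)) = true}

/-- The sigma-algebra generated by the edge variables in time layers `0, …, N-1`. -/
def cylFilt (d : ℕ) (N : ℕ) : MeasurableSpace (Env d) :=
  MeasurableSpace.comap (fun X => fun (n : Fin N) (x y : Zd d) => X n x y) inferInstance

/-- The environment law: independent Bernoulli edge variables, the edge `(n,x) → (n+1,y)`
being open with probability `p · f (y - x)`. -/
def bernoulliEnv (d : ℕ) (p : ℝ) (f : Zd d → ℝ) (μ : Measure (Env d)) : Prop :=
  iIndepFun (fun e : ℕ × Zd d × Zd d => edgeVal d e) μ ∧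
  ∀ n x y, μ {X | X n x y = true} = ENNReal.ofReal (p * f (y - x))

/-- `N⁻¹ log Z_N` as an extended real, with value `⊥` when `Z_N = 0`. -/
def growthTerm (d : ℕ) (X : Env d) (N : ℕ) : EReal :=
  if pathCount d N X = 0 then ⊥ else ((Real.log (pathCount d N X) / N : ℝ) : EReal)

/-- The environment shifted in time by `N` and in space by `x`. -/
def shiftEnv (d N : ℕ) (x : Zd d) (X : Env d) : Env d := fun n u v => X (n + N) (u + x) (v + x)

/-- The size-biased (tilted) environment: all edges along the walk path `T` (up to time `N`)
are forced open. -/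
def tiltEnv (d N : ℕ) (T : Fin (N + 1) → Zd d) (X : Env d) : Env d := fun n x y =>
  if h : n < N then
    (if T ⟨n, Nat.lt_succ_of_lt h⟩ = x ∧ T ⟨n + 1, Nat.succ_lt_succ h⟩ = y then true else X n x y)
  else X n x y

/-- The probability that a random walk with step distribution `f` started at `0`
follows the path `T` up to time `N`. -/
def walkWeight (d N : ℕ) (f : Zd d → ℝ) (T : Fin (N + 1) → Zd d) : ℝ :=
  if T 0 = 0 then ∏ i : Fin N, f (T i.succ - T i.castSucc) else 0

/-- `(ℙ_p ⊗ P)(W̃_N ≤ K)`: the probability, under the environment law `μ` and an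
independent `f`-walk `T`, that the size-biased renormalized partition function
`W̃_N = p^{-N} Z̃_N` is at most `K`. -/
def tiltTailProb (d N : ℕ) (f : Zd d → ℝ) (p : ℝ) (μ : Measure (Env d)) (K : ℝ) : ℝ :=
  ∑ᶠ T : Fin (N + 1) → Zd d, walkWeight d N f T *
    (μ {X | (pathCount d N (tiltEnv d N T X) : ℝ) / p ^ N ≤ K}).toReal

/-- Tilted environment for an infinite walk `T`: all edges along `T` are forced open. -/
def tiltEnvFull (d : ℕ) (T : ℕ → Zd d) (X : Env d) : Env d := fun n x y =>
  if T n = x ∧ T (n + 1) = y then true else X n x y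

/-- The pinned size-biased partition function `Z̄_N`: number of oriented paths from `(0,0)`
to `(N, T_N)` which are open for the tilted environment. -/
def barZ (d N : ℕ) (T : ℕ → Zd d) (X : Env d) : ℕ :=
  Nat.card {S : Fin (N + 1) → Zd d // S 0 = 0 ∧ S (Fin.last N) = T N ∧
    ∀ i : Fin N, tiltEnvFull d T X i (S i.castSucc) (S i.succ) = true}

/-- Version of `Z̄_N` for a finite walk path `T` of length `N`. -/
def barZfin (d N : ℕ) (T : Fin (N + 1) → Zd d) (X : Env d) : ℕ :=
  Nat.card {S : Fin (N + 1) → Zd d // S 0 = 0 ∧ S (Fin.last N) = T (Fin.last N) ∧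
    ∀ i : Fin N, tiltEnv d N T X i (S i.castSucc) (S i.succ) = true}

/-- The environment shifted by `N` in time and `v` in space. -/
def envSpaceShift (d N : ℕ) (v : Zd d) (X : Env d) : Env d := fun n x y => X (n + N) (x + v) (y + v)

/-- The walk observed after time `N`, recentered at the origin. -/
def walkShift (d N : ℕ) (T : ℕ → Zd d) : ℕ → Zd d := fun n => T (n + N) - T N

/-- `ν` is the law of the random walk started at `0` with i.i.d. increments of law `f`. -/
def isWalkLaw (d : ℕ) (f : Zd d → ℝ) (ν : Measure (ℕ → Zd d)) : Prop :=
  ∀ (M : ℕ) (T' : Fin (M + 1) → Zd d),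
    ν {T | ∀ i : Fin (M + 1), T (i : ℕ) = T' i} = ENNReal.ofReal (walkWeight d M f T')

/-- Monotone coupling of environments at all parameters via uniform variables. -/
def coupledEnv {Ω : Type*} (d : ℕ) (f : Zd d → ℝ) (U : ℕ → Zd d → Zd d → Ω → ℝ)
    (q : ℝ) (ω : Ω) : Env d := fun n x y => decide (U n x y ω ≤ f (y - x) * q)

/-- `k`-fold discrete convolution `f^{∗k}` (the `k`-step transition probability). -/
def fconv (d : ℕ) (f : Zd d → ℝ) : ℕ → Zd d → ℝ
  | 0 => fun z => if z = 0 then 1 else 0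
  | (k + 1) => fun z => ∑ᶠ y, f y * fconv d f k (z - y)

/-!
Expanding `W_N = p^{-N} ∑_S 1{S open}` over paths `S`, it suffices to show
`E[1{S open} F(Z_N)] = p^N P(T = S) E[F(Z̃_N) | T = S]` for each `S`. On `{S open}` the
environment coincides with its tilt along `S`, and the tilted environment no longer sees the
edges of `S`; so the indicator and `F(Z̃_N)` are functions of disjoint sets of independent edges.
Since `f` has finite support, almost surely only the finitely many `f`-admissible paths can be
open, which makes every function involved depend on finitely many edges.
-/

section FiniteCoordinates

variable {ι Ω β γ : Type*} {Y : ι → Ω → β}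

def DependsOnlyOn (Y : ι → Ω → β) (s : Finset ι) (g : Ω → γ) : Prop :=
  ∀ ω ω', (∀ i ∈ s, Y i ω = Y i ω') → g ω = g ω'

namespace DependsOnlyOn

variable {s : Finset ι}

lemma exists_eq_comp [Nonempty γ] {g : Ω → γ} (hg : DependsOnlyOn Y s g) :
    ∃ φ : (s → β) → γ, g = fun ω => φ fun i => Y i ω := by
  classical
  have hfac : g.FactorsThrough fun ω (i : s) => Y i ω :=
    fun ω ω' h => hg ω ω' fun i hi => congrFun h ⟨i, hi⟩
  exact ⟨Function.extend (fun ω (i : s) => Y i ω) g fun _ => Classical.arbitrary γ,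
    funext fun ω => (hfac.extend_apply _ ω).symm⟩

lemma comp {δ : Type*} {g : Ω → γ} (hg : DependsOnlyOn Y s g) (φ : γ → δ) :
    DependsOnlyOn Y s fun ω => φ (g ω) :=
  fun ω ω' h => congrArg φ (hg ω ω' h)

lemma mono {g : Ω → γ} (hg : DependsOnlyOn Y s g) {t : Finset ι} (hst : s ⊆ t) :
    DependsOnlyOn Y t g :=
  fun ω ω' h => hg ω ω' fun i hi => h i (hst hi)

lemma mul {g h : Ω → ℝ} (hg : DependsOnlyOn Y s g) (hh : DependsOnlyOn Y s h) :
    DependsOnlyOn Y s fun ω => g ω * h ω :=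
  fun ω ω' hω => congrArg₂ (· * ·) (hg ω ω' hω) (hh ω ω' hω)

variable [MeasurableSpace Ω] [Finite β] [MeasurableSpace β] [MeasurableSingletonClass β]

lemma measurable [MeasurableSpace γ] [Nonempty γ] (hYm : ∀ i, Measurable (Y i)) {g : Ω → γ}
    (hg : DependsOnlyOn Y s g) :
    Measurable g := by
  obtain ⟨φ, rfl⟩ := hg.exists_eq_comp
  exact (measurable_of_finite φ).comp (measurable_pi_lambda _ fun i => hYm i)

lemma integrable {μ : Measure Ω} [IsFiniteMeasure μ] (hYm : ∀ i, Measurable (Y i))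
    {g : Ω → ℝ} (hg : DependsOnlyOn Y s g) : Integrable g μ := by
  obtain ⟨φ, rfl⟩ := hg.exists_eq_comp
  obtain ⟨C, hC⟩ := (Set.finite_range fun v => ‖φ v‖).bddAbove
  exact .of_bound (hg.measurable hYm).aestronglyMeasurable C
    (ae_of_all _ fun ω => hC ⟨_, rfl⟩)

end DependsOnlyOn

theorem integral_mul_eq_mul_integral_of_dependsOnlyOn [MeasurableSpace Ω] [Finite β]
    [MeasurableSpace β] [MeasurableSingletonClass β] {μ : Measure Ω} (hY : iIndepFun Y μ)
    (hYm : ∀ i, Measurable (Y i)) {s t : Finset ι} (hst : Disjoint s t) {g h : Ω → ℝ}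
    (hg : DependsOnlyOn Y s g) (hh : DependsOnlyOn Y t h) :
    ∫ ω, g ω * h ω ∂μ = (∫ ω, g ω ∂μ) * ∫ ω, h ω ∂μ := by
  have hgm := (hg.measurable hYm).aestronglyMeasurable (μ := μ)
  have hhm := (hh.measurable hYm).aestronglyMeasurable (μ := μ)
  obtain ⟨φ, rfl⟩ := hg.exists_eq_comp
  obtain ⟨ψ, rfl⟩ := hh.exists_eq_comp
  exact ((hY.indepFun_finset s t hst hYm).comp (measurable_of_finite φ)
    (measurable_of_finite ψ)).integral_fun_mul_eq_mul_integral hgm hhm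

end FiniteCoordinates

namespace OrientedPercolation

open Finset

variable {d N : ℕ}

lemma measurable_edgeVal (e : ℕ × Zd d × Zd d) : Measurable (edgeVal d e) :=
  (measurable_pi_apply e.2.2).comp ((measurable_pi_apply e.2.1).comp (measurable_pi_apply e.1))

def pathEdges (T : Fin (N + 1) → Zd d) : Finset (ℕ × Zd d × Zd d) :=
  univ.image fun i : Fin N => ((i : ℕ), T i.castSucc, T i.succ)

def openEvent (T : Fin (N + 1) → Zd d) : Set (Env d) :=
  {X | ∀ i : Fin N, X i (T i.castSucc) (T i.succ) = true}

variable {T : Fin (N + 1) → Zd d} {X : Env d}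

lemma mem_openEvent_iff : X ∈ openEvent T ↔ ∀ e ∈ pathEdges T, edgeVal d e X = true := by
  simp [openEvent, pathEdges, edgeVal]

lemma openEvent_eq_biInter (T : Fin (N + 1) → Zd d) :
    openEvent T = ⋂ e ∈ pathEdges T, edgeVal d e ⁻¹' {true} := by
  ext X
  simp [mem_openEvent_iff]

lemma measurableSet_openEvent (T : Fin (N + 1) → Zd d) : MeasurableSet (openEvent T) := by
  rw [openEvent_eq_biInter]
  exact measurableSet_biInter _ fun e _ => measurable_edgeVal e (measurableSet_singleton _)

lemma tiltEnv_apply (n : ℕ) (x y : Zd d) :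
    tiltEnv d N T X n x y = (decide ((n, x, y) ∈ pathEdges T) || X n x y) := by
  have hmem : (n, x, y) ∈ pathEdges T ↔
      ∃ h : n < N, T ⟨n, by omega⟩ = x ∧ T ⟨n + 1, by omega⟩ = y := by
    simp only [pathEdges, mem_image, mem_univ, true_and, Prod.mk.injEq]
    constructor
    · rintro ⟨i, rfl, hx, hy⟩
      exact ⟨i.isLt, hx, hy⟩
    · rintro ⟨h, hx, hy⟩
      exact ⟨⟨n, h⟩, rfl, hx, hy⟩
  unfold tiltEnv
  by_cases h : n < N <;> simp [hmem, h]

lemma tiltEnv_of_mem_openEvent (h : X ∈ openEvent T) : tiltEnv d N T X = X := by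
  funext n x y
  by_cases he : (n, x, y) ∈ pathEdges T
  · rw [tiltEnv_apply, decide_eq_true he, Bool.true_or]
    exact (mem_openEvent_iff.1 h _ he).symm
  · rw [tiltEnv_apply, decide_eq_false he, Bool.false_or]

lemma edgeVal_tiltEnv (e : ℕ × Zd d × Zd d) :
    edgeVal d e (tiltEnv d N T X) = (decide (e ∈ pathEdges T) || edgeVal d e X) :=
  tiltEnv_apply _ _ _

variable {f : Zd d → ℝ}

lemma walkWeight_ne_zero_iff :
    walkWeight d N f T ≠ 0 ↔ T 0 = 0 ∧ ∀ i : Fin N, f (T i.succ - T i.castSucc) ≠ 0 := by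
  unfold walkWeight
  split_ifs with h0 <;> simp [h0, prod_ne_zero_iff]

lemma finite_support_walkWeight (hf : (Function.support f).Finite) (N : ℕ) :
    (Function.support (walkWeight d N f)).Finite := by
  refine Set.Finite.of_finite_image (f := fun T (i : Fin N) => T i.succ - T i.castSucc)
    ((Set.Finite.pi fun _ => hf).subset ?_) ?_
  · rintro _ ⟨T, hT, rfl⟩
    exact Set.mem_pi.2 fun i _ => (walkWeight_ne_zero_iff.1 hT).2 i
  · intro T hT T' hT' hsteps
    funext j
    induction j using Fin.induction with
    | zero => rw [(walkWeight_ne_zero_iff.1 hT).1, (walkWeight_ne_zero_iff.1 hT').1]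
    | succ i ih => simpa [ih] using congrFun hsteps i

def closedOffSupport (f : Zd d → ℝ) : Set (Env d) :=
  {X | ∀ n x y, f (y - x) = 0 → X n x y = false}

lemma tiltEnv_mem_closedOffSupport (hX : X ∈ closedOffSupport f) (hT : walkWeight d N f T ≠ 0) :
    tiltEnv d N T X ∈ closedOffSupport f := by
  intro n x y hxy
  rw [tiltEnv_apply, hX n x y hxy, Bool.or_false, decide_eq_false_iff_not]
  simp only [pathEdges, mem_image, mem_univ, true_and, Prod.mk.injEq, not_exists, not_and]
  rintro i - rfl rfl
  exact (walkWeight_ne_zero_iff.1 hT).2 i hxy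

lemma ae_mem_closedOffSupport {p : ℝ} {μ : Measure (Env d)}
    (hμ : ∀ n x y, μ {X | X n x y = true} = ENNReal.ofReal (p * f (y - x))) :
    ∀ᵐ X ∂μ, X ∈ closedOffSupport f := by
  simp only [closedOffSupport, Set.mem_ofPred_eq, ae_all_iff]
  intro n x y hf
  have hnull : μ {X | X n x y = true} = 0 := by rw [hμ, hf, mul_zero, ENNReal.ofReal_zero]
  filter_upwards [measure_eq_zero_iff_ae_notMem.1 hnull] with X hX
  simpa using hX

open Classical in
def openCount (P : Finset (Fin (N + 1) → Zd d)) (X : Env d) : ℕ :=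
  #{S ∈ P | X ∈ openEvent S}

variable {P : Finset (Fin (N + 1) → Zd d)}

lemma pathCount_eq_openCount (hP : ∀ S, S ∈ P ↔ walkWeight d N f S ≠ 0)
    (hX : X ∈ closedOffSupport f) : pathCount d N X = openCount P X := by
  classical
  have hiff : ∀ S, (S 0 = 0 ∧ X ∈ openEvent S) ↔ S ∈ {S ∈ P | X ∈ openEvent S} := by
    intro S
    rw [mem_filter, hP, walkWeight_ne_zero_iff]
    refine ⟨fun ⟨h0, hS⟩ => ⟨⟨h0, fun i hi => ?_⟩, hS⟩,
      fun ⟨⟨h0, _⟩, hS⟩ => ⟨h0, hS⟩⟩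
    exact Bool.false_ne_true ((hX i _ _ hi).symm.trans (hS i))
  rw [pathCount, openCount, ← Nat.card_eq_finsetCard]
  exact Nat.card_congr (Equiv.subtypeEquivRight hiff)

lemma dependsOnlyOn_openCount (P : Finset (Fin (N + 1) → Zd d)) :
    DependsOnlyOn (edgeVal d) (P.biUnion pathEdges) (openCount P) := by
  classical
  intro X Y h
  refine congrArg card (filter_congr fun S hS => ?_)
  simp only [mem_openEvent_iff]
  exact forall₂_congr fun e he => by rw [h e (mem_biUnion.2 ⟨S, hS, he⟩)]

lemma dependsOnlyOn_indicator_openEvent (T : Fin (N + 1) → Zd d) :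
    DependsOnlyOn (edgeVal d) (pathEdges T) ((openEvent T).indicator (1 : Env d → ℝ)) := by
  intro X Y h
  have hXY : X ∈ openEvent T ↔ Y ∈ openEvent T := by
    simp only [mem_openEvent_iff]
    exact forall₂_congr fun e he => by rw [h e he]
  by_cases hX : X ∈ openEvent T
  · rw [Set.indicator_of_mem hX, Set.indicator_of_mem (hXY.1 hX)]
    rfl
  · rw [Set.indicator_of_notMem hX, Set.indicator_of_notMem (mt hXY.2 hX)]

lemma cast_openCount_eq_sum_indicator (P : Finset (Fin (N + 1) → Zd d)) (X : Env d) :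
    (openCount P X : ℝ) = ∑ S ∈ P, (openEvent S).indicator 1 X := by
  classical
  simp [openCount, Set.indicator_apply, sum_boole]

lemma measureReal_openEvent {p : ℝ} {μ : Measure (Env d)} (henv : bernoulliEnv d p f μ)
    (hp : 0 ≤ p) (hf : ∀ z, 0 ≤ f z) (hT0 : T 0 = 0) :
    μ.real (openEvent T) = p ^ N * walkWeight d N f T := by
  have hedge : ∀ i : Fin N,
      (μ (edgeVal d ((i : ℕ), T i.castSucc, T i.succ) ⁻¹' {true})).toReal
        = p * f (T i.succ - T i.castSucc) := fun i => by
    rw [← ENNReal.toReal_ofReal (mul_nonneg hp (hf _)), ← henv.2]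
    rfl
  rw [measureReal_def, openEvent_eq_biInter,
    henv.1.meas_biInter fun e _ => ⟨{true}, trivial, rfl⟩, pathEdges,
    prod_image fun i _ j _ h => Fin.val_injective (congrArg Prod.fst h), ENNReal.toReal_prod,
    prod_congr rfl fun i _ => hedge i, prod_mul_distrib, prod_const, card_univ,
    Fintype.card_fin, walkWeight, if_pos hT0]

theorem integral_indicator_openEvent_mul {p : ℝ} {μ : Measure (Env d)}
    (henv : bernoulliEnv d p f μ) (hp : 0 ≤ p) (hf : ∀ z, 0 ≤ f z)
    (hP : ∀ S, S ∈ P ↔ walkWeight d N f S ≠ 0) (hT : walkWeight d N f T ≠ 0)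
    (G : ℕ → ℝ) :
    ∫ X, (openEvent T).indicator 1 X * G (openCount P X) ∂μ
      = p ^ N * (walkWeight d N f T * ∫ X, G (pathCount d N (tiltEnv d N T X)) ∂μ) := by
  have htilt : DependsOnlyOn (edgeVal d) (P.biUnion pathEdges \ pathEdges T)
      fun X => G (openCount P (tiltEnv d N T X)) := by
    intro X Y h
    refine congrArg G (dependsOnlyOn_openCount P _ _ fun e he => ?_)
    rw [edgeVal_tiltEnv, edgeVal_tiltEnv]
    by_cases heT : e ∈ pathEdges T
    · simp [heT]
    · rw [h e (mem_sdiff.2 ⟨he, heT⟩)]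
  calc ∫ X, (openEvent T).indicator 1 X * G (openCount P X) ∂μ
      = ∫ X, (openEvent T).indicator 1 X * G (openCount P (tiltEnv d N T X)) ∂μ := by
        congr 1
        funext X
        by_cases hX : X ∈ openEvent T
        · rw [tiltEnv_of_mem_openEvent hX]
        · simp [hX]
    _ = μ.real (openEvent T) * ∫ X, G (openCount P (tiltEnv d N T X)) ∂μ := by
        rw [integral_mul_eq_mul_integral_of_dependsOnlyOn henv.1 measurable_edgeVal
          disjoint_sdiff (dependsOnlyOn_indicator_openEvent T) htilt,
          integral_indicator_one (measurableSet_openEvent T)]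
    _ = _ := by
        rw [measureReal_openEvent henv hp hf (walkWeight_ne_zero_iff.1 hT).1, mul_assoc]
        congr 2
        refine integral_congr_ae ?_
        filter_upwards [ae_mem_closedOffSupport henv.2] with X hX
        rw [pathCount_eq_openCount hP (tiltEnv_mem_closedOffSupport hX hT)]

end OrientedPercolation

open Finset OrientedPercolation

theorem stmt10_general (d : ℕ) (f : Zd d → ℝ) (hf0 : ∀ z, 0 ≤ f z)
    (hfin : (Function.support f).Finite)
    (p : ℝ) (hp : 0 < p)
    (μ : Measure (Env d))
    (henv : bernoulliEnv d p f μ) (N : ℕ)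
    (F : ℝ → ℝ) :
    ∑ᶠ T : Fin (N + 1) → Zd d,
        walkWeight d N f T * ∫ X, F (pathCount d N (tiltEnv d N T X)) ∂μ
      = ∫ X, W d p N X * F (pathCount d N X) ∂μ := by
  have := henv.1.isProbabilityMeasure
  set P := (finite_support_walkWeight hfin N).toFinset
  have hP : ∀ S, S ∈ P ↔ walkWeight d N f S ≠ 0 :=
    fun S => (finite_support_walkWeight hfin N).mem_toFinset
  have hW : ∀ᵐ X ∂μ, W d p N X * F (pathCount d N X)
      = (∑ T ∈ P, (openEvent T).indicator 1 X * F (openCount P X)) / p ^ N := by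
    filter_upwards [ae_mem_closedOffSupport henv.2] with X hX
    rw [W, pathCount_eq_openCount hP hX, cast_openCount_eq_sum_indicator, ← sum_mul,
      div_mul_eq_mul_div]
  have hint : ∀ T ∈ P,
      Integrable (fun X => (openEvent T).indicator 1 X * F (openCount P X)) μ :=
    fun T hT => DependsOnlyOn.integrable measurable_edgeVal
      (((dependsOnlyOn_indicator_openEvent T).mono (subset_biUnion_of_mem pathEdges hT)).mul
        ((dependsOnlyOn_openCount P).comp fun k => F k))
  rw [integral_congr_ae hW, integral_div, integral_finsetSum P hint,
    sum_congr rfl fun T hT =>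
      integral_indicator_openEvent_mul henv hp.le hf0 hP ((hP T).1 hT) (F ·),
    ← mul_sum, mul_div_cancel_left₀ _ (pow_ne_zero N hp.ne')]
  exact finsum_eq_sum_of_support_subset _ fun T hT =>
    (hP T).2 (Function.support_mul_subset_left _ _ hT)

/-- Size-biasing identity: for bounded measurable `F`,
`E_p ⊗ E[F(Z̃_N)] = E_p[W_N F(Z_N)]`, the left side being the expectation over an
independent `f`-walk `T` of the path count in the tilted environment. -/
theorem stmt10 (d : ℕ) (f : Zd d → ℝ) (hf0 : ∀ z, 0 ≤ f z)
    (hfin : (Function.support f).Finite) (hsum : ∑ᶠ z, f z = 1)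
    (p : ℝ) (hp : 0 < p) (hpmax : ∀ z, p * f z ≤ 1)
    (μ : Measure (Env d)) [IsProbabilityMeasure μ]
    (henv : bernoulliEnv d p f μ) (N : ℕ)
    (F : ℝ → ℝ) (hFmeas : Measurable F) (hFbdd : ∃ C : ℝ, ∀ x, |F x| ≤ C) :
    ∑ᶠ T : Fin (N + 1) → Zd d,
        walkWeight d N f T * ∫ X, F (pathCount d N (tiltEnv d N T X)) ∂μ
      = ∫ X, W d p N X * F (pathCount d N X) ∂μ :=
  stmt10_general d f hf0 hfin p hp μ henv N F
end
end

section
/- If under $\mathbb{P}_p\otimes\mathbf{P}$ the size-biased renormalized partition function $\tilde W_N$ converges to $+\infty$ in probability as $N\to\infty$, then $W_\infty = 0$ $\mathbb{P}_p$-almost surely. -/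
open MeasureTheory ProbabilityTheory Filter

noncomputable section

/-!
Forcing open the edges of a fixed path `T` does not affect the other edges, which are
independent of them; hence `P(walk = T) · μ(tilted environment ∈ A) = p^{-N} μ(A ∩ {T is open})`
for every event `A`, and summing over `T` counts the open paths. This gives the size-biasing
bound `P(W̃_N ≤ K) ≥ E[W_N; W_N ≤ K]`. If `W_∞` were not a.s. zero, then with positive
probability `W_N ∈ [a, K]` for all large `N`, so `P(W̃_N ≤ K) ≥ a · c > 0` for all large `N`,
contradicting `W̃_N → ∞` in probability.
-/

open scoped ENNReal

lemma natCard_le_tsum_indicator {α : Type*} (s : Set α) :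
    (Nat.card s : ℝ≥0∞) ≤ ∑' a, s.indicator 1 a := by
  rw [← tsum_subtype, Pi.one_def, ENNReal.tsum_set_one, Nat.card_coe_set_eq]
  exact_mod_cast s.ncard_le_encard

lemma natCard_eq_toReal_tsum_indicator {α : Type*} (s : Set α) :
    (Nat.card s : ℝ) = (∑' a, s.indicator 1 a : ℝ≥0∞).toReal := by
  -- for infinite `s` both sides are junk zeros: `Nat.card s = 0` and `(⊤ : ℝ≥0∞).toReal = 0`
  rw [← tsum_subtype, Pi.one_def, ENNReal.tsum_set_one, Nat.card_coe_set_eq]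
  rcases s.finite_or_infinite with hs | hs
  · rw [← hs.cast_ncard_eq]; simp
  · simp [hs.ncard, hs.encard_eq]

lemma ofReal_finsum_of_nonneg {α : Type*} {g : α → ℝ} (hg : ∀ a, 0 ≤ g a)
    (hfin : (Function.support g).Finite) :
    ENNReal.ofReal (∑ᶠ a, g a) = ∑' a, ENNReal.ofReal (g a) := by
  rw [finsum_eq_sum_of_support_subset g hfin.coe_toFinset.ge,
    ENNReal.ofReal_sum_of_nonneg fun a _ => hg a, tsum_eq_sum]
  intro a ha
  rw [hfin.mem_toFinset, Function.notMem_support] at ha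
  rw [ha, ENNReal.ofReal_zero]

def openPathEvent (d N : ℕ) (T : Fin (N + 1) → Zd d) : Set (Env d) :=
  {X | ∀ i : Fin N, X i (T i.castSucc) (T i.succ) = true}

def pathEdges (d N : ℕ) (T : Fin (N + 1) → Zd d) : Set (ℕ × Zd d × Zd d) :=
  Set.range fun i : Fin N => ((i : ℕ), T i.castSucc, T i.succ)

lemma measurable_edgeVal (d : ℕ) (e : ℕ × Zd d × Zd d) : Measurable (edgeVal d e) :=
  (measurable_pi_apply e.2.2).comp ((measurable_pi_apply e.2.1).comp (measurable_pi_apply e.1))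

lemma openPathEvent_eq_iInter (d N : ℕ) (T : Fin (N + 1) → Zd d) :
    openPathEvent d N T = ⋂ i : Fin N, edgeVal d ((i : ℕ), T i.castSucc, T i.succ) ⁻¹' {true} := by
  ext X; simp [openPathEvent, edgeVal]

lemma measurableSet_openPathEvent (d N : ℕ) (T : Fin (N + 1) → Zd d) :
    MeasurableSet (openPathEvent d N T) := by
  rw [openPathEvent_eq_iInter]
  exact .iInter fun i => measurable_edgeVal d _ (measurableSet_singleton true)

def rootedPathIndicator (d N : ℕ) (S : Fin (N + 1) → Zd d) : Env d → ℝ≥0∞ :=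
  if S 0 = 0 then (openPathEvent d N S).indicator 1 else 0

lemma measurable_rootedPathIndicator (d N : ℕ) (S : Fin (N + 1) → Zd d) :
    Measurable (rootedPathIndicator d N S) := by
  unfold rootedPathIndicator
  split_ifs
  exacts [measurable_const.indicator (measurableSet_openPathEvent d N S), measurable_const]

lemma tsum_indicator_openPaths (d N : ℕ) (X : Env d) :
    ∑' S, {S : Fin (N + 1) → Zd d | S 0 = 0 ∧ X ∈ openPathEvent d N S}.indicator 1 S =
      ∑' S, rootedPathIndicator d N S X := by
  congr 1; ext S
  by_cases h : S 0 = 0 <;> by_cases hX : X ∈ openPathEvent d N S <;>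
    simp [rootedPathIndicator, h, hX]

lemma pathCount_le_tsum_rootedPathIndicator (d N : ℕ) (X : Env d) :
    (pathCount d N X : ℝ≥0∞) ≤ ∑' S, rootedPathIndicator d N S X :=
  tsum_indicator_openPaths d N X ▸ natCard_le_tsum_indicator _

lemma measurable_W (d : ℕ) (p : ℝ) (N : ℕ) : Measurable (W d p N) := by
  have hZ : ∀ X, (pathCount d N X : ℝ) = (∑' S, rootedPathIndicator d N S X).toReal := by
    intro X
    rw [← tsum_indicator_openPaths]
    exact natCard_eq_toReal_tsum_indicator _
  unfold W
  simp_rw [hZ]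
  exact ((Measurable.tsum fun S => measurable_rootedPathIndicator d N S).ennreal_toReal).div_const _

lemma mem_pathEdges {d N : ℕ} {T : Fin (N + 1) → Zd d} {n : ℕ} {x y : Zd d} :
    (n, x, y) ∈ pathEdges d N T ↔
      ∃ h : n < N, T ⟨n, by omega⟩ = x ∧ T ⟨n + 1, by omega⟩ = y := by
  constructor
  · rintro ⟨i, hi⟩
    simp only [Prod.mk.injEq] at hi
    obtain ⟨rfl, rfl, rfl⟩ := hi
    exact ⟨i.isLt, rfl, rfl⟩
  · rintro ⟨h, rfl, rfl⟩
    exact ⟨⟨n, h⟩, rfl⟩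

lemma tiltEnv_apply_of_mem {d N : ℕ} {T : Fin (N + 1) → Zd d} (X : Env d) {n : ℕ} {x y : Zd d}
    (h : (n, x, y) ∈ pathEdges d N T) : tiltEnv d N T X n x y = true := by
  obtain ⟨hn, rfl, rfl⟩ := mem_pathEdges.mp h
  simp [tiltEnv, hn]

lemma tiltEnv_apply_of_notMem {d N : ℕ} {T : Fin (N + 1) → Zd d} (X : Env d) {n : ℕ}
    {x y : Zd d} (h : (n, x, y) ∉ pathEdges d N T) : tiltEnv d N T X n x y = X n x y := by
  rw [mem_pathEdges] at h
  unfold tiltEnv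
  split_ifs with hn hT
  · exact absurd ⟨hn, hT⟩ h
  all_goals rfl

lemma tiltEnv_of_mem_openPathEvent {d N : ℕ} {T : Fin (N + 1) → Zd d} {X : Env d}
    (hX : X ∈ openPathEvent d N T) : tiltEnv d N T X = X := by
  funext n x y
  by_cases h : (n, x, y) ∈ pathEdges d N T
  · obtain ⟨i, hi⟩ := h
    simp only [Prod.mk.injEq] at hi
    obtain ⟨rfl, rfl, rfl⟩ := hi
    exact (tiltEnv_apply_of_mem X ⟨i, rfl⟩).trans (hX i).symm
  · exact tiltEnv_apply_of_notMem X h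

lemma measurable_tiltEnv (d N : ℕ) (T : Fin (N + 1) → Zd d) :
    Measurable[⨆ e ∈ (pathEdges d N T)ᶜ, MeasurableSpace.comap (edgeVal d e) inferInstance]
      (tiltEnv d N T) := by
  let _ := ⨆ e ∈ (pathEdges d N T)ᶜ, MeasurableSpace.comap (edgeVal d e) inferInstance
  refine measurable_pi_lambda _ fun n => measurable_pi_lambda _ fun x =>
    measurable_pi_lambda _ fun y => ?_
  by_cases h : (n, x, y) ∈ pathEdges d N T
  · simp only [tiltEnv_apply_of_mem _ h, measurable_const]
  · simp only [tiltEnv_apply_of_notMem _ h]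
    exact measurable_iff_comap_le.mpr (le_iSup₂ (f := fun e (_ : e ∈ (pathEdges d N T)ᶜ) =>
      MeasurableSpace.comap (edgeVal d e) inferInstance) (n, x, y) h)

lemma measurableSet_openPathEvent_biSup (d N : ℕ) (T : Fin (N + 1) → Zd d) :
    MeasurableSet[⨆ e ∈ pathEdges d N T, MeasurableSpace.comap (edgeVal d e) inferInstance]
      (openPathEvent d N T) := by
  rw [openPathEvent_eq_iInter]
  refine MeasurableSet.iInter fun i => ?_
  exact le_iSup₂ (f := fun e (_ : e ∈ pathEdges d N T) =>
    MeasurableSpace.comap (edgeVal d e) inferInstance) _ ⟨i, rfl⟩ _ ⟨{true}, trivial, rfl⟩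

lemma measure_tiltEnv_preimage_inter {d N : ℕ} {p : ℝ} {f : Zd d → ℝ} {μ : Measure (Env d)}
    (henv : bernoulliEnv d p f μ) (T : Fin (N + 1) → Zd d) {A : Set (Env d)}
    (hA : MeasurableSet A) :
    μ (tiltEnv d N T ⁻¹' A ∩ openPathEvent d N T) =
      μ (tiltEnv d N T ⁻¹' A) * μ (openPathEvent d N T) := by
  have hIndep := indep_biSup_compl (fun e => (measurable_edgeVal d e).comap_le) henv.1.iIndep
    (pathEdges d N T)
  rw [Set.inter_comm, mul_comm]
  exact (Indep_iff _ _ _).mp hIndep _ _ (measurableSet_openPathEvent_biSup d N T)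
    (measurable_tiltEnv d N T hA)

lemma measure_openPathEvent {d N : ℕ} {p : ℝ} {f : Zd d → ℝ} {μ : Measure (Env d)}
    (hp : 0 ≤ p) (hf0 : ∀ z, 0 ≤ f z) (henv : bernoulliEnv d p f μ) (T : Fin (N + 1) → Zd d) :
    μ (openPathEvent d N T) =
      ENNReal.ofReal (p ^ N * ∏ i : Fin N, f (T i.succ - T i.castSucc)) := by
  have hinj : Function.Injective fun i : Fin N => ((i : ℕ), T i.castSucc, T i.succ) :=
    fun i j hij => Fin.ext (congrArg Prod.fst hij)
  rw [openPathEvent_eq_iInter, (henv.1.precomp hinj).iIndep.meas_iInter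
    fun i => ⟨{true}, trivial, rfl⟩]
  have hedge : ∀ i : Fin N, μ (edgeVal d ((i : ℕ), T i.castSucc, T i.succ) ⁻¹' {true}) =
      ENNReal.ofReal (p * f (T i.succ - T i.castSucc)) := fun i => henv.2 _ _ _
  rw [Finset.prod_congr rfl fun i _ => hedge i,
    ← ENNReal.ofReal_prod_of_nonneg fun i _ => mul_nonneg hp (hf0 _), Finset.prod_mul_distrib,
    Finset.prod_const, Finset.card_univ, Fintype.card_fin]

lemma eq_of_forall_sub_eq {d N : ℕ} {T T' : Fin (N + 1) → Zd d} (h0 : T 0 = T' 0)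
    (h : ∀ i : Fin N, T i.succ - T i.castSucc = T' i.succ - T' i.castSucc) : T = T' := by
  funext j
  induction j using Fin.induction with
  | zero => exact h0
  | succ i ih => exact sub_left_injective ((h i).trans (by rw [ih]))

lemma walkWeight_nonneg {d N : ℕ} {f : Zd d → ℝ} (hf0 : ∀ z, 0 ≤ f z)
    (T : Fin (N + 1) → Zd d) : 0 ≤ walkWeight d N f T := by
  unfold walkWeight
  split_ifs
  exacts [Finset.prod_nonneg fun i _ => hf0 _, le_rfl]

lemma finite_support_walkWeight (d N : ℕ) {f : Zd d → ℝ} (hfin : (Function.support f).Finite) :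
    (Function.support (walkWeight d N f)).Finite := by
  have hsupp : ∀ T, walkWeight d N f T ≠ 0 →
      T 0 = 0 ∧ ∀ i : Fin N, f (T i.succ - T i.castSucc) ≠ 0 := by
    intro T hT
    unfold walkWeight at hT
    split_ifs at hT with h0
    · exact ⟨h0, fun i => (Finset.prod_ne_zero_iff.mp hT) i (Finset.mem_univ i)⟩
    · exact absurd rfl hT
  let increments : (Fin (N + 1) → Zd d) → Fin N → Zd d := fun T i => T i.succ - T i.castSucc
  refine Set.Finite.of_finite_image (f := increments) ?_ ?_
  · refine (Set.Finite.pi (t := fun _ : Fin N => Function.support f) fun _ => hfin).subset ?_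
    rintro _ ⟨T, hT, rfl⟩ i -
    exact (hsupp T hT).2 i
  · intro T hT T' hT' h
    exact eq_of_forall_sub_eq ((hsupp T hT).1.trans (hsupp T' hT').1.symm) (congrFun h)

section SizeBiasing

variable {d N : ℕ} {f : Zd d → ℝ} {p : ℝ} {μ : Measure (Env d)}

lemma ofReal_tiltTailProb [IsFiniteMeasure μ] (hf0 : ∀ z, 0 ≤ f z)
    (hfin : (Function.support f).Finite) (K : ℝ) :
    ENNReal.ofReal (tiltTailProb d N f p μ K) =
      ∑' T, ENNReal.ofReal (walkWeight d N f T) * μ (tiltEnv d N T ⁻¹' {X | W d p N X ≤ K}) := by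
  unfold tiltTailProb
  rw [ofReal_finsum_of_nonneg (fun T => mul_nonneg (walkWeight_nonneg hf0 T) ENNReal.toReal_nonneg)
    ((finite_support_walkWeight d N hfin).subset (Function.support_mul_subset_left _ _))]
  congr 1; ext T
  rw [ENNReal.ofReal_mul (walkWeight_nonneg hf0 T), ENNReal.ofReal_toReal (measure_ne_top _ _)]
  rfl

lemma tiltTailProb_nonneg (hf0 : ∀ z, 0 ≤ f z) (K : ℝ) : 0 ≤ tiltTailProb d N f p μ K :=
  finsum_nonneg fun T => mul_nonneg (walkWeight_nonneg hf0 T) ENNReal.toReal_nonneg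

lemma ofReal_walkWeight_mul_measure_tiltEnv_preimage (hp : 0 ≤ p) (hf0 : ∀ z, 0 ≤ f z)
    (henv : bernoulliEnv d p f μ) {T : Fin (N + 1) → Zd d} (hT : T 0 = 0) {A : Set (Env d)}
    (hA : MeasurableSet A) :
    ENNReal.ofReal (p ^ N) * (ENNReal.ofReal (walkWeight d N f T) * μ (tiltEnv d N T ⁻¹' A)) =
      μ (A ∩ openPathEvent d N T) := by
  have hAE : A ∩ openPathEvent d N T = tiltEnv d N T ⁻¹' A ∩ openPathEvent d N T := by
    ext X
    refine and_congr_left fun hX => ?_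
    rw [Set.mem_preimage, tiltEnv_of_mem_openPathEvent hX]
  rw [hAE, measure_tiltEnv_preimage_inter henv T hA, measure_openPathEvent hp hf0 henv T,
    ENNReal.ofReal_mul (pow_nonneg hp N), walkWeight, if_pos hT]
  ring

lemma setLIntegral_rootedPathIndicator {T : Fin (N + 1) → Zd d} (hT : T 0 = 0)
    (A : Set (Env d)) :
    ∫⁻ X in A, rootedPathIndicator d N T X ∂μ = μ (A ∩ openPathEvent d N T) := by
  rw [rootedPathIndicator, if_pos hT, lintegral_indicator_one (measurableSet_openPathEvent d N T),
    Measure.restrict_apply (measurableSet_openPathEvent d N T), Set.inter_comm]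

theorem lintegral_pathCount_le (hp : 0 ≤ p) (hf0 : ∀ z, 0 ≤ f z) (henv : bernoulliEnv d p f μ)
    {A : Set (Env d)} (hA : MeasurableSet A) :
    ∫⁻ X in A, (pathCount d N X : ℝ≥0∞) ∂μ ≤
      ENNReal.ofReal (p ^ N) *
        ∑' T, ENNReal.ofReal (walkWeight d N f T) * μ (tiltEnv d N T ⁻¹' A) := by
  calc ∫⁻ X in A, (pathCount d N X : ℝ≥0∞) ∂μ
      ≤ ∫⁻ X in A, ∑' S, rootedPathIndicator d N S X ∂μ :=
        lintegral_mono (pathCount_le_tsum_rootedPathIndicator d N)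
    _ = ∑' S, ∫⁻ X in A, rootedPathIndicator d N S X ∂μ :=
        lintegral_tsum fun S => (measurable_rootedPathIndicator d N S).aemeasurable
    _ = ∑' T, ENNReal.ofReal (p ^ N) *
          (ENNReal.ofReal (walkWeight d N f T) * μ (tiltEnv d N T ⁻¹' A)) := by
        congr 1; ext T
        by_cases hT : T 0 = 0
        · rw [ofReal_walkWeight_mul_measure_tiltEnv_preimage hp hf0 henv hT hA,
            setLIntegral_rootedPathIndicator hT]
        · simp [rootedPathIndicator, hT, walkWeight]
    _ = _ := ENNReal.tsum_mul_left

theorem setLIntegral_W_le_tiltTailProb [IsFiniteMeasure μ] (hp : 0 < p) (hf0 : ∀ z, 0 ≤ f z)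
    (hfin : (Function.support f).Finite) (henv : bernoulliEnv d p f μ) (K : ℝ) :
    ∫⁻ X in {X | W d p N X ≤ K}, ENNReal.ofReal (W d p N X) ∂μ ≤
      ENNReal.ofReal (tiltTailProb d N f p μ K) := by
  have hpN : 0 < p ^ N := pow_pos hp N
  have hW : ∀ X, ENNReal.ofReal (W d p N X) = ENNReal.ofReal (p ^ N)⁻¹ * pathCount d N X := by
    intro X
    rw [W, div_eq_inv_mul, ENNReal.ofReal_mul (inv_nonneg.mpr hpN.le), ENNReal.ofReal_natCast]
  have hcancel : ENNReal.ofReal (p ^ N)⁻¹ * ENNReal.ofReal (p ^ N) = 1 := by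
    rw [← ENNReal.ofReal_mul (inv_nonneg.mpr hpN.le), inv_mul_cancel₀ hpN.ne', ENNReal.ofReal_one]
  simp_rw [hW]
  rw [lintegral_const_mul' _ _ ENNReal.ofReal_ne_top, ofReal_tiltTailProb hf0 hfin K]
  calc _ ≤ ENNReal.ofReal (p ^ N)⁻¹ * (ENNReal.ofReal (p ^ N) * _) :=
        mul_le_mul_right
          (lintegral_pathCount_le hp.le hf0 henv (measurable_W d p N measurableSet_Iic)) _
    _ = _ := by rw [← mul_assoc, hcancel, one_mul]; rfl

theorem mul_measure_le_tiltTailProb [IsFiniteMeasure μ] (hp : 0 < p) (hf0 : ∀ z, 0 ≤ f z)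
    (hfin : (Function.support f).Finite) (henv : bernoulliEnv d p f μ) {a : ℝ} (ha : 0 ≤ a)
    (K : ℝ) : a * (μ {X | a ≤ W d p N X ∧ W d p N X ≤ K}).toReal ≤ tiltTailProb d N f p μ K := by
  set S := {X | a ≤ W d p N X ∧ W d p N X ≤ K}
  have hmarkov : ENNReal.ofReal a * μ S ≤ ENNReal.ofReal (tiltTailProb d N f p μ K) :=
    calc ENNReal.ofReal a * μ S = ∫⁻ _ in S, ENNReal.ofReal a ∂μ := (setLIntegral_const _ _).symm
      _ ≤ ∫⁻ X in S, ENNReal.ofReal (W d p N X) ∂μ :=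
        setLIntegral_mono (measurable_W d p N).ennreal_ofReal
          fun X hX => ENNReal.ofReal_le_ofReal hX.1
      _ ≤ ∫⁻ X in {X | W d p N X ≤ K}, ENNReal.ofReal (W d p N X) ∂μ :=
        lintegral_mono_set fun X hX => hX.2
      _ ≤ _ := setLIntegral_W_le_tiltTailProb hp hf0 hfin henv K
  have := ENNReal.toReal_le_of_le_ofReal (tiltTailProb_nonneg hf0 K) hmarkov
  rwa [ENNReal.toReal_mul, ENNReal.toReal_ofReal ha] at this

end SizeBiasing

lemma exists_measure_eventually_mem_Icc_ne_zero {Ω : Type*} [MeasurableSpace Ω] {μ : Measure Ω}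
    {g : ℕ → Ω → ℝ} {g' : Ω → ℝ} (hg : ∀ n ω, 0 ≤ g n ω)
    (hlim : ∀ᵐ ω ∂μ, Tendsto (g · ω) atTop (nhds (g' ω))) (hne : ¬ ∀ᵐ ω ∂μ, g' ω = 0) :
    ∃ k M : ℕ, μ {ω | ∀ n ≥ M, 1 / ((k : ℝ) + 1) ≤ g n ω ∧ g n ω ≤ (k : ℝ) + 1} ≠ 0 := by
  by_contra! hnull
  refine hne ?_
  have hnot : ∀ᵐ ω ∂μ, ∀ k M : ℕ,
      ¬ ∀ n ≥ M, 1 / ((k : ℝ) + 1) ≤ g n ω ∧ g n ω ≤ (k : ℝ) + 1 :=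
    ae_all_iff.mpr fun k => ae_all_iff.mpr fun M => measure_eq_zero_iff_ae_notMem.mp (hnull k M)
  filter_upwards [hlim, hnot] with ω hω hnotω
  by_contra hne0
  have hpos : 0 < g' ω :=
    (ge_of_tendsto' hω fun n => hg n ω).lt_of_ne (Ne.symm hne0)
  obtain ⟨k, hk⟩ := exists_nat_gt (max (1 / g' ω) (g' ω))
  have hlow : 1 / ((k : ℝ) + 1) < g' ω := by
    rw [div_lt_iff₀ (by positivity)]
    have := (div_lt_iff₀ hpos).mp ((le_max_left _ _).trans_lt hk)
    nlinarith
  have hup : g' ω < (k : ℝ) + 1 := by linarith [le_max_right (1 / g' ω) (g' ω)]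
  obtain ⟨M, hM⟩ := eventually_atTop.mp
    ((hω.eventually_const_le hlow).and (hω.eventually_le_const hup))
  exact hnotω k M hM

theorem stmt11_general (d : ℕ) (f : Zd d → ℝ) (hf0 : ∀ z, 0 ≤ f z)
    (hfin : (Function.support f).Finite)
    (p : ℝ) (hp : 0 < p)
    (μ : Measure (Env d)) [IsProbabilityMeasure μ]
    (henv : bernoulliEnv d p f μ)
    (Winf : Env d → ℝ)
    (hWinf : ∀ᵐ X ∂μ, Tendsto (fun N => W d p N X) atTop (nhds (Winf X)))
    (hdiv : ∀ K : ℝ, Tendsto (fun N => tiltTailProb d N f p μ K) atTop (nhds 0)) :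
    ∀ᵐ X ∂μ, Winf X = 0 := by
  by_contra hne
  obtain ⟨k, M, hpos⟩ := exists_measure_eventually_mem_Icc_ne_zero
    (fun N X => div_nonneg (Nat.cast_nonneg _) (pow_pos hp N).le) hWinf hne
  set a : ℝ := 1 / ((k : ℝ) + 1)
  set c := (μ {X | ∀ N ≥ M, a ≤ W d p N X ∧ W d p N X ≤ (k : ℝ) + 1}).toReal
  have hac : 0 < a * c := mul_pos (by positivity) (ENNReal.toReal_pos hpos (measure_ne_top _ _))
  have hlower : ∀ N ≥ M, a * c ≤ tiltTailProb d N f p μ ((k : ℝ) + 1) := fun N hN =>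
    (mul_le_mul_of_nonneg_left (ENNReal.toReal_mono (measure_ne_top _ _)
      (measure_mono (Set.ofPred_subset_ofPred.mpr fun X hX => hX N hN))) (by positivity)).trans
      (mul_measure_le_tiltTailProb hp hf0 hfin henv (by positivity) _)
  obtain ⟨N, hsmall, hN⟩ :=
    (((hdiv _).eventually_lt_const hac).and (eventually_ge_atTop M)).exists
  exact (hlower N hN).not_gt hsmall

/-- If `W̃_N → ∞` in probability under `ℙ_p ⊗ P`, then `W_∞ = 0`
`ℙ_p`-almost surely. -/
theorem stmt11 (d : ℕ) (f : Zd d → ℝ) (hf0 : ∀ z, 0 ≤ f z)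
    (hfin : (Function.support f).Finite) (hsum : ∑ᶠ z, f z = 1)
    (p : ℝ) (hp : 0 < p) (hpmax : ∀ z, p * f z ≤ 1)
    (μ : Measure (Env d)) [IsProbabilityMeasure μ]
    (henv : bernoulliEnv d p f μ)
    (Winf : Env d → ℝ)
    (hWinf : ∀ᵐ X ∂μ, Tendsto (fun N => W d p N X) atTop (nhds (Winf X)))
    (hdiv : ∀ K : ℝ, Tendsto (fun N => tiltTailProb d N f p μ K) atTop (nhds 0)) :
    ∀ᵐ X ∂μ, Winf X = 0 :=
  stmt11_general d f hf0 hfin p hp μ henv Winf hWinf hdiv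
end
end
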